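/- arXiv:2105.07253 — 3 statements merged into one kernel-verified Lean document; each statement's English description precedes it below -/
import Mathlib

section
/- Let B be an operator on bounded functions Q : S×A → ℝ that is a γ-contraction in the sup norm (‖BQ − BQ'‖_∞ ≤ γ‖Q−Q'‖_∞ for 0 < γ < 1). Define the iteration Q_k = Q_{k-1} + α(B Q_{k-1} − Q_{k-1}) for a learning rate 0 < α ≤ 1. Then for all k ≥ 0, ‖B Q_k − Q_k‖_∞ ≤ (αγ + 1 − α)^k ‖B Q_0 − Q_0‖_∞. -/
/-! The residual `B Q - Q` of a relaxed step `Q' = Q + α (B Q - Q)` splits as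
`(B Q' - B Q) + (1 - α) (B Q - Q)`; the contraction bounds the first term by `γ α ‖B Q - Q‖`,
so each step multiplies the residual norm by at most `α γ + 1 - α`. -/

theorem norm_apply_relaxedStep_sub_le {E : Type*} [SeminormedAddCommGroup E] [NormedSpace ℝ E]
    {B : E → E} {γ α : ℝ} (hα0 : 0 ≤ α) (hα1 : α ≤ 1)
    (hB : ∀ f g, ‖B f - B g‖ ≤ γ * ‖f - g‖) (x : E) :
    ‖B (x + α • (B x - x)) - (x + α • (B x - x))‖ ≤ (α * γ + 1 - α) * ‖B x - x‖ := by
  set y := x + α • (B x - x)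
  have hsplit : B y - y = (B y - B x) + (1 - α) • (B x - x) := by module
  have hstep : ‖B y - B x‖ ≤ γ * (α * ‖B x - x‖) := by
    calc ‖B y - B x‖ ≤ γ * ‖y - x‖ := hB y x
      _ = γ * (α * ‖B x - x‖) := by
        rw [add_sub_cancel_left, norm_smul, Real.norm_of_nonneg hα0]
  calc ‖B y - y‖ ≤ ‖B y - B x‖ + ‖(1 - α) • (B x - x)‖ := hsplit ▸ norm_add_le _ _
    _ ≤ γ * (α * ‖B x - x‖) + (1 - α) * ‖B x - x‖ := by
      rw [norm_smul, Real.norm_of_nonneg (sub_nonneg.mpr hα1)]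
      exact add_le_add_left hstep _
    _ = (α * γ + 1 - α) * ‖B x - x‖ := by ring

theorem stmt_4_general {X : Type*}
    (B : lp (fun _ : X => ℝ) ⊤ → lp (fun _ : X => ℝ) ⊤)
    (γ α : ℝ) (hγ0 : 0 < γ) (hα0 : 0 < α) (hα1 : α ≤ 1)
    (hB : ∀ f g, ‖B f - B g‖ ≤ γ * ‖f - g‖)
    (Q : ℕ → lp (fun _ : X => ℝ) ⊤)
    (hQ : ∀ k, Q (k + 1) = Q k + α • (B (Q k) - Q k)) :
    ∀ k, ‖B (Q k) - Q k‖ ≤ (α * γ + 1 - α) ^ k * ‖B (Q 0) - Q 0‖ := by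
  intro k
  have hrate : 0 ≤ α * γ + 1 - α := by nlinarith
  refine le_geom (u := fun k => ‖B (Q k) - Q k‖) hrate k fun j _ => ?_
  simpa only [hQ] using norm_apply_relaxedStep_sub_le hα0.le hα1 hB (Q j)

theorem stmt_4 {X : Type*} [Nonempty X]
    (B : lp (fun _ : X => ℝ) ⊤ → lp (fun _ : X => ℝ) ⊤)
    (γ α : ℝ) (hγ0 : 0 < γ) (hγ1 : γ < 1) (hα0 : 0 < α) (hα1 : α ≤ 1)
    (hB : ∀ f g, ‖B f - B g‖ ≤ γ * ‖f - g‖)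
    (Q : ℕ → lp (fun _ : X => ℝ) ⊤)
    (hQ : ∀ k, Q (k + 1) = Q k + α • (B (Q k) - Q k)) :
    ∀ k, ‖B (Q k) - Q k‖ ≤ (α * γ + 1 - α) ^ k * ‖B (Q 0) - Q 0‖ :=
  stmt_4_general B γ α hγ0 hα0 hα1 hB Q hQ
end

section
/- Under the same setting (B a γ-contraction in sup norm, Q_k = Q_{k-1} + α(B Q_{k-1} − Q_{k-1})), for all k ≥ 1: ‖B Q_{k-1} − Q_k‖_∞ ≤ (1−α)(αγ + 1 − α)^{k−1} ‖B Q_0 − Q_0‖_∞. -/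
/-! The residual `B x - x` shrinks by the factor `α * γ + 1 - α` under one relaxed step
`y = x + α • (B x - x)`, since `B y - y = (B y - B x) + (1 - α) • (B x - x)` and
`‖y - x‖ = α * ‖B x - x‖`; moreover `B x - y = (1 - α) • (B x - x)`. -/

section RelaxedIteration

variable {E : Type*} [SeminormedAddCommGroup E] [NormedSpace ℝ E] {B : E → E} {α γ : ℝ}

theorem sub_relaxed_step (B : E → E) (α : ℝ) (x : E) :
    B x - (x + α • (B x - x)) = (1 - α) • (B x - x) := by
  module

theorem norm_residual_relaxed_step_le (hα0 : 0 ≤ α) (hα1 : α ≤ 1)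
    (hB : ∀ f g, ‖B f - B g‖ ≤ γ * ‖f - g‖) (x : E) :
    ‖B (x + α • (B x - x)) - (x + α • (B x - x))‖ ≤ (α * γ + 1 - α) * ‖B x - x‖ := by
  set y := x + α • (B x - x)
  have hsplit : B y - y = (B y - B x) + (1 - α) • (B x - x) := by
    rw [← sub_relaxed_step B α x, sub_add_sub_cancel]
  have hstep : y - x = α • (B x - x) := add_sub_cancel_left _ _
  calc ‖B y - y‖
      ≤ ‖B y - B x‖ + ‖(1 - α) • (B x - x)‖ := hsplit ▸ norm_add_le _ _
    _ ≤ γ * ‖y - x‖ + (1 - α) * ‖B x - x‖ := by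
        rw [norm_smul, Real.norm_of_nonneg (sub_nonneg.2 hα1)]
        gcongr
        exact hB y x
    _ = (α * γ + 1 - α) * ‖B x - x‖ := by
        rw [hstep, norm_smul, Real.norm_of_nonneg hα0]; ring

theorem norm_residual_le_geom (hγ0 : 0 ≤ γ) (hα0 : 0 ≤ α) (hα1 : α ≤ 1)
    (hB : ∀ f g, ‖B f - B g‖ ≤ γ * ‖f - g‖) {Q : ℕ → E}
    (hQ : ∀ k, Q (k + 1) = Q k + α • (B (Q k) - Q k)) (k : ℕ) :
    ‖B (Q k) - Q k‖ ≤ (α * γ + 1 - α) ^ k * ‖B (Q 0) - Q 0‖ :=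
  le_geom (u := fun k => ‖B (Q k) - Q k‖) (by nlinarith) k fun j _ => by
    simpa only [hQ j] using norm_residual_relaxed_step_le hα0 hα1 hB (Q j)

end RelaxedIteration

theorem stmt_5_general {X : Type*}
    (B : lp (fun _ : X => ℝ) ⊤ → lp (fun _ : X => ℝ) ⊤)
    (γ α : ℝ) (hγ0 : 0 < γ) (hα0 : 0 < α) (hα1 : α ≤ 1)
    (hB : ∀ f g, ‖B f - B g‖ ≤ γ * ‖f - g‖)
    (Q : ℕ → lp (fun _ : X => ℝ) ⊤)
    (hQ : ∀ k, Q (k + 1) = Q k + α • (B (Q k) - Q k)) :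
    ∀ k, ‖B (Q k) - Q (k + 1)‖ ≤ (1 - α) * (α * γ + 1 - α) ^ k * ‖B (Q 0) - Q 0‖ := by
  intro k
  have h1α : 0 ≤ 1 - α := sub_nonneg.2 hα1
  rw [hQ k, sub_relaxed_step, norm_smul, Real.norm_of_nonneg h1α, mul_assoc]
  exact mul_le_mul_of_nonneg_left (norm_residual_le_geom hγ0.le hα0.le hα1 hB hQ k) h1α

theorem stmt_5 {X : Type*} [Nonempty X]
    (B : lp (fun _ : X => ℝ) ⊤ → lp (fun _ : X => ℝ) ⊤)
    (γ α : ℝ) (hγ0 : 0 < γ) (hγ1 : γ < 1) (hα0 : 0 < α) (hα1 : α ≤ 1)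
    (hB : ∀ f g, ‖B f - B g‖ ≤ γ * ‖f - g‖)
    (Q : ℕ → lp (fun _ : X => ℝ) ⊤)
    (hQ : ∀ k, Q (k + 1) = Q k + α • (B (Q k) - Q k)) :
    ∀ k, ‖B (Q k) - Q (k + 1)‖ ≤ (1 - α) * (α * γ + 1 - α) ^ k * ‖B (Q 0) - Q 0‖ :=
  stmt_5_general B γ α hγ0 hα0 hα1 hB Q hQ
end

section
/- In a finite MDP with discount factor γ ∈ (0,1), for any two policies π̃ and π: η(π̃) − η(π) = (1/(1−γ)) · E_{(s,a)∼d^{π̃}}[A^π(s,a)], where η is the expected discounted return, d^{π̃} is the discounted stationary state-action distribution of π̃, and A^π = Q^π − V^π is the advantage function of π. -/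
/-!
Let `f = Vt - Vp` and let `P` be the state-to-state kernel of `πt`. Since `Qp` is a one-step
look-ahead of `Vp`, the Bellman equation of `πt` turns the `πt`-average of the advantage
`Qp - Vp` at `s` into `((I - γP) f)(s)`. The occupancy equation says `dt (I - γP) = (1 - γ) ρ₀`,
so averaging over `dt` gives `(1 - γ) ⟨ρ₀, f⟩`.
-/

open Finset Matrix

section

variable {S A R : Type*} [Fintype S] [Fintype A] [CommRing R]

def policyKernel (π : S → A → R) (T : S → A → S → R) : Matrix S S R :=
  Matrix.of fun s s' => ∑ a, π s a * T s a s'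

theorem policyKernel_mulVec_apply (π : S → A → R) (T : S → A → S → R) (g : S → R) (s : S) :
    (policyKernel π T *ᵥ g) s = ∑ a, π s a * ∑ s', T s a s' * g s' := by
  simp only [mulVec, dotProduct, policyKernel, of_apply, sum_mul, mul_sum, mul_assoc]
  exact sum_comm

theorem vecMul_policyKernel_apply (π : S → A → R) (T : S → A → S → R) (d : S → R) (s : S) :
    (d ᵥ* policyKernel π T) s = ∑ s', ∑ a, d s' * π s' a * T s' a s := by
  simp only [vecMul, dotProduct, policyKernel, of_apply, mul_sum, mul_assoc]

theorem occupancy_dotProduct_sub_smul_mulVec {γ : R} {ρ d : S → R} (P : Matrix S S R)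
    (hd : d = (1 - γ) • ρ + γ • (d ᵥ* P)) (g : S → R) :
    d ⬝ᵥ (g - γ • (P *ᵥ g)) = (1 - γ) * (ρ ⬝ᵥ g) := by
  rw [dotProduct_sub, dotProduct_smul, dotProduct_mulVec]
  nth_rewrite 1 [hd]
  simp only [add_dotProduct, smul_dotProduct, smul_eq_mul]
  ring

theorem sum_mul_sub_eq_sub_smul_policyKernel_mulVec {π : S → A → R} {T : S → A → S → R}
    {r : S → A → R} {γ : R} {V V' : S → R} {Q Q' : S → A → R} (hπ : ∀ s, ∑ a, π s a = 1)
    (hQ : ∀ s a, Q s a = r s a + γ * ∑ s', T s a s' * V s') (hV : ∀ s, V s = ∑ a, π s a * Q s a)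
    (hQ' : ∀ s a, Q' s a = r s a + γ * ∑ s', T s a s' * V' s') (s : S) :
    ∑ a, π s a * (Q' s a - V' s) = ((V - V') - γ • (policyKernel π T *ᵥ (V - V'))) s := by
  have hV' : ∑ a, π s a * V' s = V' s := by rw [← sum_mul, hπ s, one_mul]
  have hterm : ∀ a, π s a * (Q' s a - V' s) = π s a * Q s a - π s a * V' s
      - γ * (π s a * ∑ s', T s a s' * (V - V') s') := by
    intro a
    simp only [hQ, hQ', Pi.sub_apply, mul_sub, sum_sub_distrib]
    ring
  rw [sum_congr rfl fun a _ => hterm a, sum_sub_distrib, sum_sub_distrib, ← hV s, hV', ← mul_sum]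
  simp only [Pi.sub_apply, Pi.smul_apply, smul_eq_mul, policyKernel_mulVec_apply]

end

theorem stmt_8_general {S A : Type*} [Fintype S] [Fintype A]
    (T : S → A → S → ℝ) (r : S → A → ℝ) (γ : ℝ) (ρ₀ : S → ℝ)
    (hγ1 : γ < 1)
    (πt : S → A → ℝ)
    (hπt1 : ∀ s, ∑ a, πt s a = 1)
    (Vt Vp : S → ℝ) (Qt Qp : S → A → ℝ) (dt : S → ℝ)
    (hQt : ∀ s a, Qt s a = r s a + γ * ∑ s', T s a s' * Vt s')
    (hVt : ∀ s, Vt s = ∑ a, πt s a * Qt s a)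
    (hQp : ∀ s a, Qp s a = r s a + γ * ∑ s', T s a s' * Vp s')
    (hd : ∀ s, dt s = (1 - γ) * ρ₀ s + γ * ∑ s', ∑ a', dt s' * πt s' a' * T s' a' s) :
    (∑ s, ρ₀ s * Vt s) - (∑ s, ρ₀ s * Vp s)
      = (1 / (1 - γ)) * ∑ s, ∑ a, dt s * πt s a * (Qp s a - Vp s) := by
  have hocc : dt = (1 - γ) • ρ₀ + γ • (dt ᵥ* policyKernel πt T) := by
    funext s
    simp only [Pi.add_apply, Pi.smul_apply, smul_eq_mul, vecMul_policyKernel_apply, hd s]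
  have hadv := sum_mul_sub_eq_sub_smul_policyKernel_mulVec hπt1 hQt hVt hQp
  calc (∑ s, ρ₀ s * Vt s) - (∑ s, ρ₀ s * Vp s)
      = ρ₀ ⬝ᵥ (Vt - Vp) := by simp only [dotProduct, Pi.sub_apply, mul_sub, sum_sub_distrib]
    _ = (1 / (1 - γ)) * ((1 - γ) * (ρ₀ ⬝ᵥ (Vt - Vp))) := by
      field_simp [sub_ne_zero.2 hγ1.ne']
    _ = (1 / (1 - γ)) * ∑ s, ∑ a, dt s * πt s a * (Qp s a - Vp s) := by
      rw [← occupancy_dotProduct_sub_smul_mulVec _ hocc]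
      simp only [dotProduct, ← hadv, mul_sum, mul_assoc]

theorem stmt_8 {S A : Type*} [Fintype S] [Fintype A]
    (T : S → A → S → ℝ) (r : S → A → ℝ) (γ : ℝ) (ρ₀ : S → ℝ)
    (hγ0 : 0 < γ) (hγ1 : γ < 1)
    (hT0 : ∀ s a s', 0 ≤ T s a s') (hT1 : ∀ s a, ∑ s', T s a s' = 1)
    (hρ0 : ∀ s, 0 ≤ ρ₀ s) (hρ1 : ∑ s, ρ₀ s = 1)
    (πt π : S → A → ℝ)
    (hπt0 : ∀ s a, 0 ≤ πt s a) (hπt1 : ∀ s, ∑ a, πt s a = 1)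
    (hπ0 : ∀ s a, 0 ≤ π s a) (hπ1 : ∀ s, ∑ a, π s a = 1)
    (Vt Vp : S → ℝ) (Qt Qp : S → A → ℝ) (dt : S → ℝ)
    (hQt : ∀ s a, Qt s a = r s a + γ * ∑ s', T s a s' * Vt s')
    (hVt : ∀ s, Vt s = ∑ a, πt s a * Qt s a)
    (hQp : ∀ s a, Qp s a = r s a + γ * ∑ s', T s a s' * Vp s')
    (hVp : ∀ s, Vp s = ∑ a, π s a * Qp s a)
    (hd : ∀ s, dt s = (1 - γ) * ρ₀ s + γ * ∑ s', ∑ a', dt s' * πt s' a' * T s' a' s) :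
    (∑ s, ρ₀ s * Vt s) - (∑ s, ρ₀ s * Vp s)
      = (1 / (1 - γ)) * ∑ s, ∑ a, dt s * πt s a * (Qp s a - Vp s) :=
  stmt_8_general T r γ ρ₀ hγ1 πt hπt1 Vt Vp Qt Qp dt hQt hVt hQp hd
end
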